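/- Fix θ > 0. Let S ∈ Sp(2d, ℝ) (i.e. Sᵀ J S = J with J = [[0, I_d],[−I_d, 0]]) and τ ∈ ℝ^{2d}, and let φ(z) = Sz + τ. Then φ is an internal symmetry of the star product: for all Schwartz functions f, g : ℝ^{2d} → ℂ, (f ⋆_θ g) ∘ φ = (f ∘ φ) ⋆_θ (g ∘ φ). -/

import Mathlib

open MeasureTheory Complex Real Matrix

/-- `B u v = ⟨x-part of u, w-part of v⟩` on `ℝ^{2d}`, where the `x`-variables are indexed
by `Sum.inl` and the `w`-variables by `Sum.inr`. -/
noncomputable def Bform (d : ℕ) (u v : (Fin d ⊕ Fin d) → ℝ) : ℝ :=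
  ∑ i : Fin d, u (Sum.inl i) * v (Sum.inr i)

/-- The star product `(f ⋆_θ g)(z)` on `ℝ^{2d} ≅ ℝ^d × ℝ^d`: with `z = (x,w)`,
`z₁ = (x₁,w₁)`, `z₂ = (x₂,w₂)`, the phase is
`⟨x₂−x, w₁⟩ + ⟨x−x₁, w₂⟩ + ⟨x₁−x₂, w⟩ = B(z₂−z, z₁) + B(z−z₁, z₂) + B(z₁−z₂, z)`. -/
noncomputable def sprod (d : ℕ) (θ : ℝ) (f g : ((Fin d ⊕ Fin d) → ℝ) → ℂ) :
    ((Fin d ⊕ Fin d) → ℝ) → ℂ := fun z =>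
  (((Real.pi * θ) ^ (-(2 * d : ℤ)) : ℝ) : ℂ) *
    ∫ p : ((Fin d ⊕ Fin d) → ℝ) × ((Fin d ⊕ Fin d) → ℝ),
      f p.1 * g p.2 * Complex.exp (2 * Complex.I / (θ : ℂ) *
        ((Bform d (p.2 - z) p.1 + Bform d (z - p.1) p.2 + Bform d (p.1 - p.2) z : ℝ) : ℂ))

/-- The standard symplectic matrix `J = [[0, I],[−I, 0]]`. -/
noncomputable def Jmat (d : ℕ) : Matrix (Fin d ⊕ Fin d) (Fin d ⊕ Fin d) ℝ :=
  Matrix.fromBlocks 0 1 (-1) 0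

/-!
The phase of the star product at `(z, z₁, z₂)` is the symplectic area `ω(z₂ - z, z₁ - z)` with
`ω(u, v) = u ⬝ᵥ J *ᵥ v`. It only sees differences, so translations leave it unchanged, and
`Sᵀ J S = J` says exactly that `S` preserves `ω`. Moreover `det S = ±1`, so `φ z = S z + τ`
preserves Lebesgue measure, and substituting `(z₁, z₂) ↦ (φ z₁, φ z₂)` in the integral defining
`(f ⋆ g)(φ z)` yields `((f ∘ φ) ⋆ (g ∘ φ))(z)`.
-/

section SymplecticMatrix
variable {ι R : Type*} [Fintype ι] [CommRing R] {S J : Matrix ι ι R}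

theorem dotProduct_mulVec_mulVec_of_transpose_mul_mul_eq (hS : Sᵀ * J * S = J) (u v : ι → R) :
    S *ᵥ u ⬝ᵥ J *ᵥ (S *ᵥ v) = u ⬝ᵥ J *ᵥ v := by
  rw [mulVec_mulVec, dotProduct_mulVec, ← vecMul_transpose, vecMul_vecMul, ← Matrix.mul_assoc, hS,
    ← dotProduct_mulVec]

theorem det_sq_eq_one_of_transpose_mul_mul_eq [DecidableEq ι] [IsDomain R]
    (hS : Sᵀ * J * S = J) (hJ : J.det ≠ 0) : S.det ^ 2 = 1 := by
  have h := congrArg det hS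
  rw [det_mul, det_mul, det_transpose] at h
  exact mul_right_cancel₀ hJ (by linear_combination h)

end SymplecticMatrix

theorem Jmat_mul_Jmat (d : ℕ) : Jmat d * Jmat d = -1 := by
  simp [Jmat, fromBlocks_multiply, ← fromBlocks_one, fromBlocks_neg]

theorem abs_det_eq_one_of_symplectic {d : ℕ} {S : Matrix (Fin d ⊕ Fin d) (Fin d ⊕ Fin d) ℝ}
    (hS : Sᵀ * Jmat d * S = Jmat d) : |S.det| = 1 := by
  have hJ : (Jmat d).det ≠ 0 :=
    det_ne_zero_of_right_inverse (B := -Jmat d) (by rw [mul_neg, Jmat_mul_Jmat, neg_neg])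
  rw [← sq_eq_sq₀ (abs_nonneg _) zero_le_one, sq_abs, one_pow,
    det_sq_eq_one_of_transpose_mul_mul_eq hS hJ]

theorem dotProduct_Jmat_mulVec (d : ℕ) (u v : (Fin d ⊕ Fin d) → ℝ) :
    u ⬝ᵥ Jmat d *ᵥ v = Bform d u v - Bform d v u := by
  simp only [dotProduct, mulVec, Jmat, mul_comm, Fintype.sum_sum_type, fromBlocks_apply₁₁,
    Matrix.zero_apply, zero_mul, Finset.sum_const_zero, fromBlocks_apply₁₂, one_apply, ite_mul,
    one_mul, Finset.sum_ite_eq, Finset.mem_univ, ↓reduceIte, zero_add, fromBlocks_apply₂₁,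
    Matrix.neg_apply, neg_mul, Finset.sum_neg_distrib, fromBlocks_apply₂₂, add_zero, Bform]
  ring

theorem Bform_phase_eq (d : ℕ) (z z₁ z₂ : (Fin d ⊕ Fin d) → ℝ) :
    Bform d (z₂ - z) z₁ + Bform d (z - z₁) z₂ + Bform d (z₁ - z₂) z =
      (z₂ - z) ⬝ᵥ Jmat d *ᵥ (z₁ - z) := by
  simp only [dotProduct_Jmat_mulVec, Bform, Pi.sub_apply, sub_mul, mul_sub, Finset.sum_sub_distrib]
  ring

theorem Bform_phase_comp_affine {d : ℕ} {S : Matrix (Fin d ⊕ Fin d) (Fin d ⊕ Fin d) ℝ}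
    (hS : Sᵀ * Jmat d * S = Jmat d) (τ z z₁ z₂ : (Fin d ⊕ Fin d) → ℝ) :
    Bform d ((S *ᵥ z₂ + τ) - (S *ᵥ z + τ)) (S *ᵥ z₁ + τ) +
        Bform d ((S *ᵥ z + τ) - (S *ᵥ z₁ + τ)) (S *ᵥ z₂ + τ) +
        Bform d ((S *ᵥ z₁ + τ) - (S *ᵥ z₂ + τ)) (S *ᵥ z + τ) =
      Bform d (z₂ - z) z₁ + Bform d (z - z₁) z₂ + Bform d (z₁ - z₂) z := by
  rw [Bform_phase_eq, Bform_phase_eq, add_sub_add_right_eq_sub, add_sub_add_right_eq_sub,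
    ← mulVec_sub, ← mulVec_sub, dotProduct_mulVec_mulVec_of_transpose_mul_mul_eq hS]

section AffineMap
variable {ι : Type*} [Fintype ι] [DecidableEq ι]

theorem measurePreserving_mulVec_add {S : Matrix ι ι ℝ} (hS : |S.det| = 1) (τ : ι → ℝ) :
    MeasurePreserving (fun y => S *ᵥ y + τ) := by
  refine (measurePreserving_add_right volume τ).comp
    ⟨(toLin' S).continuous_of_finiteDimensional.measurable, ?_⟩
  have hS0 : LinearMap.det (toLin' S) ≠ 0 := by
    rw [LinearMap.det_toLin']; rintro h; simp [h] at hS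
  change Measure.map (toLin' S) volume = volume
  rw [Measure.map_linearMap_addHaar_eq_smul_addHaar volume hS0, LinearMap.det_toLin', abs_inv, hS]
  simp

theorem measurableEmbedding_mulVec_add {S : Matrix ι ι ℝ} (hS : S.det ≠ 0) (τ : ι → ℝ) :
    MeasurableEmbedding (fun y => S *ᵥ y + τ) := by
  have hS0 : LinearMap.det (toLin' S) ≠ 0 := by rwa [LinearMap.det_toLin']
  exact ((LinearMap.equivOfDetNeZero _ hS0).toContinuousLinearEquiv.toHomeomorph.trans
    (Homeomorph.addRight τ)).measurableEmbedding

end AffineMap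

theorem affine_symplectic_internal_symmetry_general (d : ℕ) (θ : ℝ)
    (S : Matrix (Fin d ⊕ Fin d) (Fin d ⊕ Fin d) ℝ) (hS : Sᵀ * Jmat d * S = Jmat d)
    (τ : (Fin d ⊕ Fin d) → ℝ)
    (f g : SchwartzMap ((Fin d ⊕ Fin d) → ℝ) ℂ) (z : (Fin d ⊕ Fin d) → ℝ) :
    sprod d θ f g (S.mulVec z + τ) =
      sprod d θ (fun y => f (S.mulVec y + τ)) (fun y => g (S.mulVec y + τ)) z := by
  have hdet := abs_det_eq_one_of_symplectic hS
  have hφ := measurePreserving_mulVec_add hdet τ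
  have hφ_emb := measurableEmbedding_mulVec_add (S := S) (by rintro h; simp [h] at hdet) τ
  unfold sprod
  rw [Measure.volume_eq_prod, ← (hφ.prod hφ).integral_comp (hφ_emb.prodMap hφ_emb)]
  simp only [Prod.map_fst, Prod.map_snd, Bform_phase_comp_affine hS]

theorem affine_symplectic_internal_symmetry (d : ℕ) (θ : ℝ) (hθ : 0 < θ)
    (S : Matrix (Fin d ⊕ Fin d) (Fin d ⊕ Fin d) ℝ) (hS : Sᵀ * Jmat d * S = Jmat d)
    (τ : (Fin d ⊕ Fin d) → ℝ)
    (f g : SchwartzMap ((Fin d ⊕ Fin d) → ℝ) ℂ) (z : (Fin d ⊕ Fin d) → ℝ) :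
    sprod d θ f g (S.mulVec z + τ) =
      sprod d θ (fun y => f (S.mulVec y + τ)) (fun y => g (S.mulVec y + τ)) z :=
  affine_symplectic_internal_symmetry_general d θ S hS τ f g z
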